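/- arXiv:2007.08639 — 9 statements merged into one kernel-verified Lean document; each statement's English description precedes it below -/
import Mathlib

section
/- Let T(y) = -1 + 2y². For every real x, the sequence n ↦ T^{∘n}(1 - x²/2^(2n+1)) converges to cos(x) as n → ∞. -/
lemma nested_cos_key (T : ℝ → ℝ) (hT : ∀ y, T y = -1 + 2 * y ^ 2) :
    ∀ (k : ℕ) (θ a d : ℝ), |a - Real.cos θ| ≤ d → d * 5 ^ k ≤ 1 / 2 →
      |T^[k] a - Real.cos (2 ^ k * θ)| ≤ d * 5 ^ k := by
  intro k
  induction k with
  | zero => intro θ a d h1 h2; simpa using h1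
  | succ k ih =>
    intro θ a d h1 h2
    have hd0 : 0 ≤ d := le_trans (abs_nonneg _) h1
    have hpow : (1:ℝ) ≤ 5 ^ (k+1) := one_le_pow₀ (by norm_num)
    have hdle : d ≤ 1/2 := by nlinarith
    have hsum : |a + Real.cos θ| ≤ 5/2 := by
      have hc := Real.abs_cos_le_one θ
      calc |a + Real.cos θ| = |(a - Real.cos θ) + 2 * Real.cos θ| := by ring_nf
        _ ≤ |a - Real.cos θ| + |2 * Real.cos θ| := abs_add_le _ _
        _ ≤ d + 2 * 1 := by
            rw [abs_mul, abs_two]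
            exact add_le_add h1 (by linarith)
        _ ≤ 5/2 := by linarith
    have hta : |T a - Real.cos (2 * θ)| ≤ 5 * d := by
      have heq : T a - Real.cos (2 * θ)
          = 2 * (a - Real.cos θ) * (a + Real.cos θ) := by
        rw [hT, Real.cos_two_mul]; ring
      rw [heq, abs_mul, abs_mul, abs_two]
      nlinarith [abs_nonneg (a - Real.cos θ), abs_nonneg (a + Real.cos θ)]
    have h5 : (5 * d) * 5 ^ k ≤ 1 / 2 := by
      calc (5 * d) * 5 ^ k = d * 5 ^ (k+1) := by ring
        _ ≤ 1/2 := h2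
    have := ih (2 * θ) (T a) (5 * d) hta h5
    rw [Function.iterate_succ_apply]
    calc |T^[k] (T a) - Real.cos (2 ^ (k+1) * θ)|
        = |T^[k] (T a) - Real.cos (2 ^ k * (2 * θ))| := by ring_nf
      _ ≤ (5 * d) * 5 ^ k := this
      _ = d * 5 ^ (k+1) := by ring

theorem nested_cos_real (T : ℝ → ℝ) (hT : ∀ y, T y = -1 + 2 * y ^ 2) (x : ℝ) :
    Filter.Tendsto (fun n : ℕ => T^[n] (1 - x ^ 2 / 2 ^ (2 * n + 1)))
      Filter.atTop (nhds (Real.cos x)) := by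
  rw [tendsto_iff_dist_tendsto_zero]
  set C : ℝ := |x| ^ 4 * (5 / 96) with hC
  have hC0 : 0 ≤ C := by positivity
  have hbnd : Filter.Tendsto (fun n : ℕ => C * (5/16) ^ n) Filter.atTop (nhds 0) := by
    simpa using (tendsto_pow_atTop_nhds_zero_of_lt_one (by norm_num) (by norm_num)
      : Filter.Tendsto (fun n : ℕ => ((5:ℝ)/16) ^ n) Filter.atTop (nhds 0)).const_mul C
  have e1 : ∀ᶠ n : ℕ in Filter.atTop, |x| ≤ 2 ^ n :=
    (tendsto_pow_atTop_atTop_of_one_lt (by norm_num : (1:ℝ) < 2)).eventually_ge_atTop |x|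
  have e2 : ∀ᶠ n : ℕ in Filter.atTop, C * (5/16) ^ n ≤ 1/2 :=
    hbnd.eventually_le_const (by norm_num : (0:ℝ) < 1/2)
  apply squeeze_zero' (g := fun n : ℕ => C * (5/16) ^ n)
  · exact Filter.Eventually.of_forall fun n => dist_nonneg
  · filter_upwards [e1, e2] with n h1 h2
    have h2n : (0:ℝ) < 2 ^ n := by positivity
    set θ : ℝ := x / 2 ^ n with hθ
    have hθ1 : |θ| ≤ 1 := by
      rw [hθ, abs_div, abs_of_pos h2n, div_le_one h2n]; exact h1
    have hcb := Real.cos_bound hθ1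
    have hkey : C * (5/16) ^ n = (|θ| ^ 4 * (5/96)) * 5 ^ n := by
      have h16 : ((2:ℝ) ^ n) ^ 4 = 16 ^ n := by
        rw [← pow_mul, mul_comm, pow_mul]; norm_num
      rw [hC, hθ, abs_div, abs_of_pos h2n, div_pow, div_pow, h16]
      field_simp
    have ha : (1 : ℝ) - x ^ 2 / 2 ^ (2 * n + 1) = 1 - θ ^ 2 / 2 := by
      have : (2:ℝ) ^ (2 * n + 1) = 2 * ((2:ℝ) ^ n) ^ 2 := by
        rw [pow_succ, two_mul, pow_add]; ring
      rw [this, hθ, div_pow]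
      field_simp
    have hd : |(1 - x ^ 2 / 2 ^ (2 * n + 1)) - Real.cos θ| ≤ |θ| ^ 4 * (5/96) := by
      rw [ha, abs_sub_comm]
      exact hcb
    have hhalf : (|θ| ^ 4 * (5/96)) * 5 ^ n ≤ 1/2 := by rw [← hkey]; exact h2
    have := nested_cos_key T hT n θ _ _ hd hhalf
    have hx : (2:ℝ) ^ n * θ = x := by
      rw [hθ]; field_simp
    rw [hx] at this
    rw [Real.dist_eq, hkey]
    exact this
  · exact hbnd
end

section
/- Let T(y) = -1 + 2y². For every complex z, the sequence n ↦ T^{∘n}(1 - z²/2^(2n+1)) converges to cos(z) as n → ∞. -/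
open Complex Finset

/-- Compatibility: the complex absolute value, as an absolute value given by the norm. -/
noncomputable def Complex.abs : AbsoluteValue ℂ ℝ := NormedField.toAbsoluteValue ℂ

lemma Complex.abs_apply' (z : ℂ) : Complex.abs z = ‖z‖ := rfl

@[simp] lemma Complex.abs_two : Complex.abs 2 = 2 := by simp [Complex.abs_apply']

@[simp] lemma Complex.abs_I : Complex.abs I = 1 := by simp [Complex.abs_apply']

lemma Complex.abs_exp (z : ℂ) : Complex.abs (Complex.exp z) = Real.exp z.re := Complex.norm_exp z

lemma Complex.abs_re_le_abs (z : ℂ) : |z.re| ≤ Complex.abs z := Complex.abs_re_le_norm z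

private lemma abs_cos_le_exp (w : ℂ) : Complex.abs (Complex.cos w) ≤ Real.exp (Complex.abs w) := by
  rw [Complex.cos]
  calc Complex.abs ((Complex.exp (w * I) + Complex.exp (-w * I)) / 2)
      ≤ (Complex.abs (Complex.exp (w * I)) + Complex.abs (Complex.exp (-w * I))) / 2 := by
        rw [map_div₀]
        simp only [Complex.abs_two]
        gcongr
        exact Complex.abs.add_le _ _
    _ ≤ (Real.exp (Complex.abs w) + Real.exp (Complex.abs w)) / 2 := by
        gcongr <;>
        · rw [Complex.abs_exp]
          apply Real.exp_le_exp.2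
          calc _ ≤ |((_ : ℂ)).re| := le_abs_self _
            _ ≤ Complex.abs _ := Complex.abs_re_le_abs _
            _ ≤ Complex.abs w := by simp [map_mul]
    _ = Real.exp (Complex.abs w) := by ring

private lemma complex_cos_bound {w : ℂ} (hw : Complex.abs w ≤ 1) :
    Complex.abs (Complex.cos w - (1 - w ^ 2 / 2)) ≤ Complex.abs w ^ 4 * (5 / 96) :=
  calc
    Complex.abs (Complex.cos w - (1 - w ^ 2 / 2))
      = Complex.abs ((Complex.exp (w * I) + Complex.exp (-w * I) - (2 - w ^ 2)) / 2) := by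
        rw [Complex.cos]
        congr 1
        ring
    _ = Complex.abs
          (((Complex.exp (w * I) - ∑ m ∈ range 4, (w * I) ^ m / m.factorial) +
              (Complex.exp (-w * I) - ∑ m ∈ range 4, (-w * I) ^ m / m.factorial)) / 2) := by
        congr 2
        have : (∑ m ∈ range 4, (w * I) ^ m / m.factorial) +
            (∑ m ∈ range 4, (-w * I) ^ m / m.factorial) = 2 - w ^ 2 := by
          simp only [sum_range_succ, range_zero, sum_empty, Nat.factorial]
          push_cast
          ring_nf
          simp [Complex.I_sq]
          ring
        rw [← this]
        ring
    _ ≤ Complex.abs ((Complex.exp (w * I) - ∑ m ∈ range 4, (w * I) ^ m / m.factorial) / 2) +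
        Complex.abs ((Complex.exp (-w * I) - ∑ m ∈ range 4, (-w * I) ^ m / m.factorial) / 2) := by
        rw [add_div]; exact Complex.abs.add_le _ _
    _ ≤ Complex.abs (w * I) ^ 4 * (5 * (Nat.factorial 4 * 4 : ℝ)⁻¹) / 2 +
        Complex.abs (-w * I) ^ 4 * (5 * (Nat.factorial 4 * 4 : ℝ)⁻¹) / 2 := by
        gcongr
        · rw [map_div₀, Complex.abs_two, div_le_div_iff_of_pos_right (by norm_num)]
          exact_mod_cast Complex.exp_bound (by simpa [Complex.abs_apply'] using hw) (by norm_num)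
        · rw [map_div₀, Complex.abs_two, div_le_div_iff_of_pos_right (by norm_num)]
          exact_mod_cast Complex.exp_bound (by simpa [Complex.abs_apply'] using hw) (by norm_num)
    _ = Complex.abs w ^ 4 * (5 / 96) := by
        simp only [map_mul, map_neg_eq_map, Complex.abs_I, mul_one, Nat.factorial]
        norm_num

private lemma iter_bound (T : ℂ → ℂ) (hT : ∀ y, T y = -1 + 2 * y ^ 2) (w : ℂ) (δ : ℝ) :
    ∀ k : ℕ, ∀ x : ℂ, Complex.abs (x - Complex.cos w) ≤ δ → δ * 6 ^ k ≤ 1 →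
      Complex.abs (T^[k] x - Complex.cos (2 ^ k * w)) ≤
        δ * 6 ^ k * Real.exp (2 ^ k * Complex.abs w) := by
  intro k
  induction k with
  | zero =>
    intro x hx _
    simp only [Function.iterate_zero, id, pow_zero, one_mul, mul_one]
    calc Complex.abs (x - Complex.cos w) ≤ δ := hx
      _ = δ * 1 := by ring
      _ ≤ δ * Real.exp (Complex.abs w) := by
          have hδ : 0 ≤ δ := le_trans (Complex.abs.nonneg _) hx
          have := Real.one_le_exp (Complex.abs.nonneg w)
          nlinarith
  | succ k ih =>
    intro x hx hδ6
    have hδ : 0 ≤ δ := le_trans (Complex.abs.nonneg _) hx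
    have h6k : δ * 6 ^ k ≤ 1 := by
      have : (6:ℝ) ^ k ≤ 6 ^ (k+1) := by
        apply pow_le_pow_right₀ (by norm_num) (by omega)
      nlinarith
    have hIH := ih x hx h6k
    set A := Complex.cos ((2:ℂ) ^ k * w) with hA
    set B := T^[k] x with hB
    have hEk : Complex.abs A ≤ Real.exp (2 ^ k * Complex.abs w) := by
      calc Complex.abs A ≤ Real.exp (Complex.abs ((2:ℂ) ^ k * w)) := abs_cos_le_exp _
        _ = Real.exp (2 ^ k * Complex.abs w) := by
            congr 1
            simp [map_mul, map_pow]
    have hE1 : (1:ℝ) ≤ Real.exp (2 ^ k * Complex.abs w) :=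
      Real.one_le_exp (by positivity)
    have key : T^[k+1] x - Complex.cos (2 ^ (k+1) * w) = 2 * (B - A) * (B + A) := by
      rw [Function.iterate_succ_apply', hT]
      have h2 : ((2:ℂ) ^ (k+1) * w) = 2 * ((2:ℂ) ^ k * w) := by ring
      rw [h2, Complex.cos_two_mul, hA]
      ring
    rw [key]
    have hrB : Complex.abs (B - A) ≤ δ * 6 ^ k * Real.exp (2 ^ k * Complex.abs w) := hIH
    have hr_le_E : Complex.abs (B - A) ≤ Real.exp (2 ^ k * Complex.abs w) := by
      calc Complex.abs (B - A) ≤ δ * 6 ^ k * Real.exp (2 ^ k * Complex.abs w) := hrB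
        _ ≤ 1 * Real.exp (2 ^ k * Complex.abs w) := by
            gcongr
        _ = Real.exp (2 ^ k * Complex.abs w) := one_mul _
    have hBA : Complex.abs (B + A) ≤ 3 * Real.exp (2 ^ k * Complex.abs w) := by
      calc Complex.abs (B + A) = Complex.abs ((B - A) + 2 * A) := by ring_nf
        _ ≤ Complex.abs (B - A) + Complex.abs (2 * A) := Complex.abs.add_le _ _
        _ ≤ Real.exp (2 ^ k * Complex.abs w) + 2 * Real.exp (2 ^ k * Complex.abs w) := by
            rw [map_mul, Complex.abs_two]
            gcongr
        _ = 3 * Real.exp (2 ^ k * Complex.abs w) := by ring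
    calc Complex.abs (2 * (B - A) * (B + A))
        = 2 * Complex.abs (B - A) * Complex.abs (B + A) := by
          simp [map_mul, Complex.abs_two]
      _ ≤ 2 * (δ * 6 ^ k * Real.exp (2 ^ k * Complex.abs w)) *
            (3 * Real.exp (2 ^ k * Complex.abs w)) := by
          gcongr
      _ = δ * 6 ^ (k+1) * (Real.exp (2 ^ k * Complex.abs w) * Real.exp (2 ^ k * Complex.abs w)) := by
          rw [pow_succ]; ring
      _ = δ * 6 ^ (k+1) * Real.exp (2 ^ (k+1) * Complex.abs w) := by
          rw [← Real.exp_add]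
          congr 1
          ring

theorem nested_cos_complex (T : ℂ → ℂ) (hT : ∀ y, T y = -1 + 2 * y ^ 2) (z : ℂ) :
    Filter.Tendsto (fun n : ℕ => T^[n] (1 - z ^ 2 / 2 ^ (2 * n + 1)))
      Filter.atTop (nhds (Complex.cos z)) := by
  rw [tendsto_iff_norm_sub_tendsto_zero]
  set a : ℝ := Complex.abs z with ha
  have ha0 : 0 ≤ a := Complex.abs.nonneg z
  set C : ℝ := a ^ 4 * (5 / 96) * Real.exp a with hC
  have hg : Filter.Tendsto (fun n : ℕ => C * (3/8:ℝ) ^ n) Filter.atTop (nhds 0) := by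
    have := (tendsto_pow_atTop_nhds_zero_of_lt_one (by norm_num : (0:ℝ) ≤ 3/8)
      (by norm_num : (3/8:ℝ) < 1)).const_mul C
    simpa using this
  have hg' : Filter.Tendsto (fun n : ℕ => a ^ 4 * (5/96) * (3/8:ℝ) ^ n) Filter.atTop (nhds 0) := by
    have := (tendsto_pow_atTop_nhds_zero_of_lt_one (by norm_num : (0:ℝ) ≤ 3/8)
      (by norm_num : (3/8:ℝ) < 1)).const_mul (a ^ 4 * (5/96))
    simpa using this
  have hw : Filter.Tendsto (fun n : ℕ => a * (1/2:ℝ) ^ n) Filter.atTop (nhds 0) := by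
    have := (tendsto_pow_atTop_nhds_zero_of_lt_one (by norm_num : (0:ℝ) ≤ 1/2)
      (by norm_num : (1/2:ℝ) < 1)).const_mul a
    simpa using this
  have hev1 : ∀ᶠ n : ℕ in Filter.atTop, a * (1/2:ℝ) ^ n ≤ 1 :=
    hw.eventually (eventually_le_nhds (by norm_num))
  have hev2 : ∀ᶠ n : ℕ in Filter.atTop, a ^ 4 * (5/96) * (3/8:ℝ) ^ n ≤ 1 :=
    hg'.eventually (eventually_le_nhds (by norm_num))
  apply squeeze_zero' (Filter.Eventually.of_forall fun n => norm_nonneg _) _ hg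
  filter_upwards [hev1, hev2] with n h1 h2
  -- setup
  set w : ℂ := z / 2 ^ n with hwdef
  have h2n : ((2:ℂ) ^ n) ≠ 0 := pow_ne_zero n two_ne_zero
  have habsw : Complex.abs w = a * (1/2:ℝ) ^ n := by
    rw [hwdef, map_div₀, map_pow, Complex.abs_two]
    rw [div_eq_mul_inv, ← inv_pow]
    norm_num
    exact ha.symm
  have hw1 : Complex.abs w ≤ 1 := by rw [habsw]; exact h1
  have hx : (1 : ℂ) - z ^ 2 / 2 ^ (2 * n + 1) = 1 - w ^ 2 / 2 := by
    rw [hwdef, div_pow, div_div, ← pow_mul, mul_comm n 2, ← pow_succ]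
  have hδdef : Complex.abs ((1 - w ^ 2 / 2) - Complex.cos w) ≤ Complex.abs w ^ 4 * (5/96) := by
    have := complex_cos_bound hw1
    rwa [← Complex.abs.map_neg, neg_sub] at this
  have hδ6 : Complex.abs w ^ 4 * (5/96) * 6 ^ n ≤ 1 := by
    rw [habsw]
    calc (a * (1/2:ℝ) ^ n) ^ 4 * (5/96) * 6 ^ n
        = a ^ 4 * (5/96) * (3/8:ℝ) ^ n := by
          rw [mul_pow, ← pow_mul]
          have : ((1/2:ℝ)) ^ (n * 4) * 6 ^ n = (3/8:ℝ) ^ n := by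
            rw [mul_comm n 4, pow_mul, ← mul_pow]
            norm_num
          calc a ^ 4 * ((1/2:ℝ)) ^ (n * 4) * (5/96) * 6 ^ n
              = a ^ 4 * (5/96) * (((1/2:ℝ)) ^ (n * 4) * 6 ^ n) := by ring
            _ = a ^ 4 * (5/96) * (3/8:ℝ) ^ n := by rw [this]
      _ ≤ 1 := h2
  have hmain := iter_bound T hT w (Complex.abs w ^ 4 * (5/96)) n (1 - w ^ 2 / 2) hδdef hδ6
  have hcz : (2:ℂ) ^ n * w = z := by
    rw [hwdef]; field_simp
  have habs2 : (2:ℝ) ^ n * Complex.abs w = a := by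
    rw [habsw]
    rw [mul_comm a, ← mul_assoc, ← mul_pow]
    norm_num
  rw [hcz, habs2] at hmain
  rw [hx]
  calc ‖T^[n] (1 - w ^ 2 / 2) - Complex.cos z‖
      = Complex.abs (T^[n] (1 - w ^ 2 / 2) - Complex.cos z) := rfl
    _ ≤ Complex.abs w ^ 4 * (5/96) * 6 ^ n * Real.exp a := hmain
    _ ≤ a ^ 4 * (5/96) * (3/8:ℝ) ^ n * Real.exp a := by
        have heq : Complex.abs w ^ 4 * (5/96) * 6 ^ n = a ^ 4 * (5/96) * ((1/2:ℝ) ^ (n*4) * 6 ^ n) := by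
          rw [habsw, mul_pow, ← pow_mul]; ring
        rw [heq]
        have : ((1/2:ℝ)) ^ (n * 4) * 6 ^ n = (3/8:ℝ) ^ n := by
          rw [mul_comm n 4, pow_mul, ← mul_pow]
          norm_num
        rw [this]
    _ = C * (3/8:ℝ) ^ n := by rw [hC]; ring
end

section
/- Let T(y) = -1 + 2y². For every real x, the sequence n ↦ T^{∘n}(1 + x²/2^(2n+1)) converges to cosh(x) as n → ∞. -/
open Real Filter

private lemma iterT_cosh (T : ℝ → ℝ) (hT : ∀ y, T y = -1 + 2 * y ^ 2) :
    ∀ (n : ℕ) (t : ℝ), T^[n] (Real.cosh t) = Real.cosh (2 ^ n * t) := by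
  intro n
  induction n with
  | zero => intro t; simp
  | succ n ih =>
    intro t
    rw [Function.iterate_succ_apply', ih, hT,
      show (2:ℝ)^(n+1) * t = 2 * (2^n * t) by ring, Real.cosh_two_mul,
      Real.sinh_sq]
    ring

private lemma cosh_log_eq {c : ℝ} (hc : 1 ≤ c) :
    Real.cosh (Real.log (c + Real.sqrt (c ^ 2 - 1))) = c := by
  have h1 : (0:ℝ) ≤ c ^ 2 - 1 := by nlinarith
  have hsn : 0 ≤ Real.sqrt (c ^ 2 - 1) := Real.sqrt_nonneg _
  have hs : 0 < c + Real.sqrt (c ^ 2 - 1) := by linarith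
  have hinv : (c + Real.sqrt (c ^ 2 - 1))⁻¹ = c - Real.sqrt (c ^ 2 - 1) := by
    have hsq : Real.sqrt (c ^ 2 - 1) ^ 2 = c ^ 2 - 1 := Real.sq_sqrt h1
    have : (c + Real.sqrt (c ^ 2 - 1)) * (c - Real.sqrt (c ^ 2 - 1)) = 1 := by
      nlinarith
    exact inv_eq_of_mul_eq_one_right this
  rw [Real.cosh_eq, Real.exp_log hs, Real.exp_neg, Real.exp_log hs, hinv]
  ring

theorem nested_cosh_real (T : ℝ → ℝ) (hT : ∀ y, T y = -1 + 2 * y ^ 2) (x : ℝ) :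
    Filter.Tendsto (fun n : ℕ => T^[n] (1 + x ^ 2 / 2 ^ (2 * n + 1)))
      Filter.atTop (nhds (Real.cosh x)) := by
  set c : ℕ → ℝ := fun n => 1 + x ^ 2 / 2 ^ (2 * n + 1) with hcdef
  have hc1 : ∀ n, 1 ≤ c n := by
    intro n
    have : (0:ℝ) ≤ x ^ 2 / 2 ^ (2 * n + 1) := by positivity
    simp only [hcdef]; linarith
  set s : ℕ → ℝ := fun n => c n + Real.sqrt ((c n) ^ 2 - 1) with hsdef
  have hs1 : ∀ n, 1 ≤ s n := by
    intro n
    have := Real.sqrt_nonneg ((c n) ^ 2 - 1)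
    have := hc1 n
    simp only [hsdef]; linarith
  have key : ∀ n, T^[n] (c n) = Real.cosh (2 ^ n * Real.log (s n)) := by
    intro n
    conv_lhs => rw [← cosh_log_eq (hc1 n)]
    exact iterT_cosh T hT n _
  -- u n = x^2 / 2^(n+1)
  set u : ℕ → ℝ := fun n => x ^ 2 / 2 ^ (n + 1) with hudef
  have hsub : ∀ n, (2:ℝ) ^ n * (s n - 1) = u n + Real.sqrt (x ^ 2 + (u n) ^ 2) := by
    intro n
    have h1 : (0:ℝ) ≤ (c n) ^ 2 - 1 := by nlinarith [hc1 n]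
    have hpow : (0:ℝ) ≤ ((2:ℝ) ^ n) ^ 2 := by positivity
    have : (2:ℝ) ^ n * Real.sqrt ((c n) ^ 2 - 1)
        = Real.sqrt (((2:ℝ) ^ n) ^ 2 * ((c n) ^ 2 - 1)) := by
      rw [Real.sqrt_mul hpow, Real.sqrt_sq (by positivity : (0:ℝ) ≤ (2:ℝ) ^ n)]
    have heq : ((2:ℝ) ^ n) ^ 2 * ((c n) ^ 2 - 1) = x ^ 2 + (u n) ^ 2 := by
      simp only [hcdef, hudef]
      have h2 : ((2:ℝ) ^ (2 * n + 1)) ≠ 0 := by positivity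
      have h3 : ((2:ℝ) ^ (n + 1)) ≠ 0 := by positivity
      field_simp
      ring
    have hu : (2:ℝ) ^ n * (c n - 1) = u n := by
      simp only [hcdef, hudef]
      have h2 : ((2:ℝ) ^ (2 * n + 1)) ≠ 0 := by positivity
      have h3 : ((2:ℝ) ^ (n + 1)) ≠ 0 := by positivity
      field_simp
      ring
    calc (2:ℝ) ^ n * (s n - 1)
        = (2:ℝ) ^ n * (c n - 1) + (2:ℝ) ^ n * Real.sqrt ((c n) ^ 2 - 1) := by
          simp only [hsdef]; ring
      _ = u n + Real.sqrt (x ^ 2 + (u n) ^ 2) := by rw [hu, this, heq]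
  -- u n → 0
  have hu0 : Tendsto u atTop (nhds 0) := by
    have : Tendsto (fun n : ℕ => x ^ 2 * (1/2 : ℝ) ^ (n + 1)) atTop (nhds (x ^ 2 * 0)) :=
      Tendsto.const_mul _ ((tendsto_pow_atTop_nhds_zero_of_lt_one (by norm_num) (by norm_num)).comp
        (tendsto_add_atTop_nat 1))
    rw [mul_zero] at this
    convert this using 2 with n
    simp only [hudef]
    rw [div_pow, one_pow, div_eq_mul_inv, ← inv_pow]
    ring_nf
    simp only [one_div]
  -- 2^n (s n - 1) → |x|
  have hA : Tendsto (fun n => (2:ℝ) ^ n * (s n - 1)) atTop (nhds |x|) := by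
    have h2 : Tendsto (fun n => x ^ 2 + (u n) ^ 2) atTop (nhds (x ^ 2 + 0)) :=
      tendsto_const_nhds.add (by simpa using hu0.pow 2)
    have h3 : Tendsto (fun n => Real.sqrt (x ^ 2 + (u n) ^ 2)) atTop (nhds (Real.sqrt (x ^ 2 + 0))) :=
      (Real.continuous_sqrt.tendsto _).comp h2
    have h4 : Tendsto (fun n => u n + Real.sqrt (x ^ 2 + (u n) ^ 2)) atTop
        (nhds (0 + Real.sqrt (x ^ 2 + 0))) := hu0.add h3
    rw [add_zero, Real.sqrt_sq_eq_abs, zero_add] at h4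
    exact h4.congr (fun n => (hsub n).symm)
  -- s n - 1 → 0
  have hδ : Tendsto (fun n => s n - 1) atTop (nhds 0) := by
    have h5 : Tendsto (fun n : ℕ => ((2:ℝ) ^ n * (s n - 1)) * (1/2 : ℝ) ^ n) atTop
        (nhds (|x| * 0)) :=
      hA.mul (tendsto_pow_atTop_nhds_zero_of_lt_one (by norm_num) (by norm_num))
    rw [mul_zero] at h5
    refine h5.congr (fun n => ?_)
    have : ((2:ℝ) ^ n) ≠ 0 := by positivity
    field_simp
    rw [mul_right_comm, ← mul_pow]; norm_num
  have hsL : Tendsto s atTop (nhds 1) := by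
    have := hδ.add (tendsto_const_nhds (x := (1:ℝ)) (f := atTop))
    rw [zero_add] at this
    exact this.congr (fun n => by ring)
  -- bounds on log
  have hupper : ∀ n, (2:ℝ) ^ n * Real.log (s n) ≤ (2:ℝ) ^ n * (s n - 1) := by
    intro n
    have := Real.log_le_sub_one_of_pos (lt_of_lt_of_le one_pos (hs1 n))
    exact mul_le_mul_of_nonneg_left this (by positivity)
  have hlower : ∀ n, (2:ℝ) ^ n * ((s n - 1) / s n) ≤ (2:ℝ) ^ n * Real.log (s n) := by
    intro n
    have hspos : (0:ℝ) < s n := lt_of_lt_of_le one_pos (hs1 n)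
    have h6 : Real.log (s n)⁻¹ ≤ (s n)⁻¹ - 1 :=
      Real.log_le_sub_one_of_pos (by positivity)
    rw [Real.log_inv] at h6
    have h7 : (s n - 1) / s n ≤ Real.log (s n) := by
      rw [div_le_iff₀ hspos]
      have h8 := mul_le_mul_of_nonneg_left h6 hspos.le
      rw [mul_sub, mul_one, mul_inv_cancel₀ hspos.ne'] at h8
      nlinarith
    exact mul_le_mul_of_nonneg_left h7 (by positivity)
  -- lower bound tends to |x|
  have hlowT : Tendsto (fun n => (2:ℝ) ^ n * ((s n - 1) / s n)) atTop (nhds |x|) := by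
    have := hA.div hsL one_ne_zero
    rw [div_one] at this
    refine this.congr (fun n => ?_)
    simp only [Pi.div_apply]
    ring
  have hL : Tendsto (fun n => (2:ℝ) ^ n * Real.log (s n)) atTop (nhds |x|) :=
    tendsto_of_tendsto_of_tendsto_of_le_of_le hlowT hA hlower hupper
  have hfinal : Tendsto (fun n => Real.cosh ((2:ℝ) ^ n * Real.log (s n))) atTop
      (nhds (Real.cosh |x|)) := (Real.continuous_cosh.tendsto _).comp hL
  rw [Real.cosh_abs] at hfinal
  exact hfinal.congr (fun n => (key n).symm)
end

section
/- Let S(y) = √((1+y)/2) and g(y) = √(2(1-y)). For every y with -1 ≤ y ≤ 1, the sequence n ↦ 2ⁿ · g(S^{∘n}(y)) converges to arccos(y) as n → ∞. -/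
open Real Filter

theorem nested_arccos (S g : ℝ → ℝ) (hS : ∀ y, S y = Real.sqrt ((1 + y) / 2))
    (hg : ∀ y, g y = Real.sqrt (2 * (1 - y)))
    (y : ℝ) (hy1 : -1 ≤ y) (hy2 : y ≤ 1) :
    Filter.Tendsto (fun n : ℕ => 2 ^ n * g (S^[n] y))
      Filter.atTop (nhds (Real.arccos y)) := by
  set θ := Real.arccos y with hθ
  have hθ0 : 0 ≤ θ := Real.arccos_nonneg y
  have hθπ : θ ≤ π := Real.arccos_le_pi y
  have hbound : ∀ n : ℕ, 0 ≤ θ / 2 ^ n ∧ θ / 2 ^ n ≤ π := by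
    intro n
    have hp : (1:ℝ) ≤ 2 ^ n := one_le_pow₀ (by norm_num : (1:ℝ) ≤ 2)
    refine ⟨by positivity, ?_⟩
    calc θ / 2 ^ n ≤ θ / 1 := div_le_div_of_nonneg_left hθ0 (by norm_num) hp
      _ = θ := by ring
      _ ≤ π := hθπ
  have hiter : ∀ n : ℕ, S^[n] y = Real.cos (θ / 2 ^ n) := by
    intro n
    induction n with
    | zero => simp [hθ, Real.cos_arccos hy1 hy2]
    | succ n ih =>
      obtain ⟨h1, h2⟩ := hbound n
      rw [Function.iterate_succ_apply', ih, hS,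
        ← Real.cos_half (by linarith [Real.pi_nonneg]) h2]
      congr 1
      rw [pow_succ]
      ring
  have hfun : ∀ n : ℕ, 2 ^ n * g (S^[n] y)
      = 2 ^ (n + 1) * Real.sin (θ / 2 ^ (n + 1)) := by
    intro n
    obtain ⟨h1, h2⟩ := hbound n
    have hsin : Real.sin (θ / 2 ^ n / 2)
        = Real.sqrt ((1 - Real.cos (θ / 2 ^ n)) / 2) :=
      Real.sin_half_eq_sqrt h1 (by linarith [Real.pi_nonneg])
    have harg : θ / 2 ^ n / 2 = θ / 2 ^ (n + 1) := by rw [pow_succ]; ring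
    have hsq : 2 * (1 - Real.cos (θ / 2 ^ n))
        = 2 ^ 2 * ((1 - Real.cos (θ / 2 ^ n)) / 2) := by ring
    have hc : Real.cos (θ / 2 ^ n) ≤ 1 := Real.cos_le_one _
    rw [hiter n, hg, hsq, Real.sqrt_mul (by positivity),
      Real.sqrt_sq (by norm_num : (0:ℝ) ≤ 2), ← hsin, harg, pow_succ]
    ring
  rw [show (fun n : ℕ => 2 ^ n * g (S^[n] y))
      = fun n : ℕ => 2 ^ (n + 1) * Real.sin (θ / 2 ^ (n + 1)) from funext hfun]
  rcases eq_or_lt_of_le hθ0 with h0 | h0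
  · simp [← h0]
  · have hxs : Tendsto (fun n : ℕ => θ / 2 ^ (n + 1)) atTop (nhds 0) := by
      apply Tendsto.div_atTop tendsto_const_nhds
      exact (tendsto_pow_atTop_atTop_of_one_lt (by norm_num : (1:ℝ) < 2)).comp
        (tendsto_add_atTop_nat 1)
    have hxs' : Tendsto (fun n : ℕ => θ / 2 ^ (n + 1)) atTop (nhdsWithin 0 {0}ᶜ) := by
      refine tendsto_nhdsWithin_of_tendsto_nhds_of_eventually_within _ hxs ?_
      filter_upwards with n
      have hpos : (0:ℝ) < θ / 2 ^ (n + 1) := by positivity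
      simpa using hpos.ne'
    have hslope : Tendsto (fun x : ℝ => Real.sin x / x) (nhdsWithin 0 {0}ᶜ)
        (nhds 1) := by
      have h := Real.hasDerivAt_sin 0
      rw [hasDerivAt_iff_tendsto_slope] at h
      have : slope Real.sin 0 = fun x : ℝ => Real.sin x / x := by
        funext x; simp [slope_def_field]
      rw [this] at h; simpa using h
    have hcomp : Tendsto (fun n : ℕ => Real.sin (θ / 2 ^ (n + 1)) / (θ / 2 ^ (n + 1)))
        atTop (nhds 1) := hslope.comp hxs'
    have hmul := hcomp.const_mul θ
    rw [mul_one] at hmul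
    refine hmul.congr fun n => ?_
    have h2p : (2:ℝ) ^ (n + 1) ≠ 0 := by positivity
    field_simp
end

section
/- Let S(y) = √((1+y)/2). The sequence n ↦ 2ⁿ · √(2(1 - S^{∘n}(0))) converges to π/2 as n → ∞. Equivalently, this nested-radical limit recovers Viète's formula for π. -/
open Real Filter

theorem viete_pi (S : ℝ → ℝ) (hS : ∀ y, S y = Real.sqrt ((1 + y) / 2)) :
    Filter.Tendsto (fun n : ℕ => 2 ^ n * Real.sqrt (2 * (1 - S^[n] 0)))
      Filter.atTop (nhds (Real.pi / 2)) := by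
  have hpi : (0:ℝ) < π := Real.pi_pos
  have key : ∀ n : ℕ, S^[n] 0 = Real.cos (π / 2 ^ (n + 1)) := by
    intro n
    induction n with
    | zero => simp
    | succ n ih =>
      rw [Function.iterate_succ_apply', ih, hS]
      have h1 : (0:ℝ) ≤ π / 2 ^ (n + 1) := by positivity
      have h2 : π / 2 ^ (n + 1) ≤ π := by
        apply div_le_self hpi.le
        exact one_le_pow₀ one_le_two
      rw [← Real.cos_half (by linarith) h2]
      congr 1
      rw [div_div]
      ring_nf
  have key2 : ∀ n : ℕ, (2:ℝ) ^ n * Real.sqrt (2 * (1 - S^[n] 0))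
      = 2 ^ (n + 1) * Real.sin (π / 2 ^ (n + 2)) := by
    intro n
    rw [key n]
    have h1 : (0:ℝ) ≤ π / 2 ^ (n + 1) := by positivity
    have h2 : π / 2 ^ (n + 1) ≤ 2 * π := by
      apply le_trans (div_le_self hpi.le (one_le_pow₀ one_le_two))
      linarith
    have hs := Real.sin_half_eq_sqrt h1 h2
    have hx : π / 2 ^ (n + 1) / 2 = π / 2 ^ (n + 2) := by
      rw [div_div]; ring_nf
    rw [hx] at hs
    rw [hs]
    rw [show 2 * (1 - Real.cos (π / 2 ^ (n+1))) = 4 * ((1 - Real.cos (π / 2 ^ (n+1))) / 2) by ring,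
      Real.sqrt_mul (by norm_num)]
    rw [show Real.sqrt 4 = 2 by
      rw [show (4:ℝ) = 2 ^ 2 by norm_num, Real.sqrt_sq (by norm_num)]]
    ring
  simp only [key2]
  -- rewrite as (π/2) * (sin x / x) with x = π / 2^(n+2)
  have key3 : ∀ n : ℕ, (2:ℝ) ^ (n + 1) * Real.sin (π / 2 ^ (n + 2))
      = π / 2 * (Real.sin (π / 2 ^ (n + 2)) / (π / 2 ^ (n + 2))) := by
    intro n
    have : (π / 2 ^ (n + 2)) ≠ 0 := by positivity
    field_simp
    ring
  simp only [key3]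
  have hlim : Tendsto (fun x : ℝ => Real.sin x / x) (nhdsWithin 0 {0}ᶜ) (nhds 1) := by
    have := hasDerivAt_iff_tendsto_slope.mp (Real.hasDerivAt_sin 0)
    rw [Real.cos_zero] at this
    convert this using 2 with x
    simp [slope_def_field]
  have hx : Tendsto (fun n : ℕ => π / 2 ^ (n + 2)) atTop (nhdsWithin 0 {0}ᶜ) := by
    apply tendsto_nhdsWithin_of_tendsto_nhds_of_eventually_within
    · have hbase : Tendsto (fun n : ℕ => ((1:ℝ)/2) ^ n) atTop (nhds 0) :=
        tendsto_pow_atTop_nhds_zero_of_lt_one (by norm_num) (by norm_num)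
      have heq : (fun n : ℕ => π / 2 ^ (n + 2)) = fun n : ℕ => (π / 4) * ((1:ℝ)/2) ^ n := by
        funext n
        rw [pow_succ, pow_succ, div_pow, one_pow]
        rw [div_eq_iff (by positivity), div_mul_eq_mul_div, div_mul_eq_mul_div,
          eq_div_iff (by positivity)]
        rw [show π * (1 / 2 ^ n) * (2 ^ n * 2 * 2) = π * ((2:ℝ) ^ n / 2 ^ n) * 4 by ring,
          div_self (pow_ne_zero n (two_ne_zero))]
        ring
      rw [heq]
      simpa using hbase.const_mul (π / 4)
    · filter_upwards with n
      have : (0:ℝ) < π / 2 ^ (n + 2) := by positivity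
      simp [this.ne']
  have := (hlim.comp hx).const_mul (π / 2)
  simpa using this
end

section
/- Let S(y) = √((1+y)/2) and h(y) = √(2(y-1)). For every real y ≥ 1, the sequence n ↦ 2ⁿ · h(S^{∘n}(y)) converges to arcosh(y) = log(y + √(y²-1)) as n → ∞. -/
theorem nested_arcosh (S h : ℝ → ℝ) (hS : ∀ y, S y = Real.sqrt ((1 + y) / 2))
    (hh : ∀ y, h y = Real.sqrt (2 * (y - 1))) (y : ℝ) (hy : 1 ≤ y) :
    Filter.Tendsto (fun n : ℕ => 2 ^ n * h (S^[n] y))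
      Filter.atTop (nhds (Real.log (y + Real.sqrt (y ^ 2 - 1)))) := by
  have hy2 : (0:ℝ) ≤ y ^ 2 - 1 := by nlinarith
  set t : ℝ := Real.arsinh (Real.sqrt (y ^ 2 - 1)) with htdef
  have ht0 : 0 ≤ t := Real.arsinh_nonneg_iff.mpr (Real.sqrt_nonneg _)
  have hlog : Real.log (y + Real.sqrt (y ^ 2 - 1)) = t := by
    rw [htdef, Real.arsinh]
    congr 1
    rw [Real.sq_sqrt hy2]
    have : 1 + (y ^ 2 - 1) = y ^ 2 := by ring
    rw [this, Real.sqrt_sq (by linarith)]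
    ring
  have hcosh : Real.cosh t = y := by
    rw [htdef, Real.cosh_arsinh, Real.sq_sqrt hy2]
    have : 1 + (y ^ 2 - 1) = y ^ 2 := by ring
    rw [this, Real.sqrt_sq (by linarith)]
  have key : ∀ n : ℕ, S^[n] y = Real.cosh (t / 2 ^ n) := by
    intro n
    induction n with
    | zero => simpa using hcosh.symm
    | succ n ih =>
      rw [Function.iterate_succ_apply', ih, hS]
      have h2 : t / 2 ^ n = 2 * (t / 2 ^ (n + 1)) := by
        field_simp; ring
      rw [h2, Real.cosh_two_mul]
      have : (1 + (Real.cosh (t / 2 ^ (n + 1)) ^ 2 + Real.sinh (t / 2 ^ (n + 1)) ^ 2)) / 2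
          = Real.cosh (t / 2 ^ (n + 1)) ^ 2 := by
        rw [Real.cosh_sq]; ring
      rw [this, Real.sqrt_sq (Real.cosh_pos _).le]
  have hval : ∀ n : ℕ, (2:ℝ) ^ n * h (S^[n] y) = 2 ^ (n + 1) * Real.sinh (t / 2 ^ (n + 1)) := by
    intro n
    rw [key n, hh]
    have h2 : t / 2 ^ n = 2 * (t / 2 ^ (n + 1)) := by field_simp; ring
    rw [h2, Real.cosh_two_mul]
    have : 2 * (Real.cosh (t / 2 ^ (n + 1)) ^ 2 + Real.sinh (t / 2 ^ (n + 1)) ^ 2 - 1)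
        = (2 * Real.sinh (t / 2 ^ (n + 1))) ^ 2 := by
      rw [Real.cosh_sq]; ring
    have hsnn : 0 ≤ Real.sinh (t / 2 ^ (n + 1)) :=
      Real.sinh_nonneg_iff.mpr (by positivity)
    rw [this, Real.sqrt_sq (by linarith)]
    ring
  rw [hlog]
  have heq : (fun n : ℕ => (2:ℝ) ^ n * h (S^[n] y))
      = fun n : ℕ => (2:ℝ) ^ (n + 1) * Real.sinh (t / 2 ^ (n + 1)) := funext hval
  rw [heq]
  rcases eq_or_lt_of_le ht0 with h0 | htpos
  · simp [← h0]
  · -- t > 0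
    set u : ℕ → ℝ := fun n => t / 2 ^ (n + 1) with hu
    have hu0 : Filter.Tendsto u Filter.atTop (nhds 0) := by
      have h2 : Filter.Tendsto (fun n : ℕ => (2:ℝ) ^ (n + 1)) Filter.atTop Filter.atTop :=
        (tendsto_pow_atTop_atTop_of_one_lt (by norm_num)).comp (Filter.tendsto_add_atTop_nat 1)
      simpa [hu, div_eq_mul_inv] using h2.inv_tendsto_atTop.const_mul t
    have hune : ∀ n, u n ≠ 0 := fun n => by
      have : (0:ℝ) < 2 ^ (n + 1) := by positivity
      exact div_ne_zero (ne_of_gt htpos) (ne_of_gt this)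
    have hu0' : Filter.Tendsto u Filter.atTop (nhdsWithin 0 {x : ℝ | x ≠ 0}) :=
      Filter.tendsto_inf.mpr ⟨hu0, Filter.tendsto_principal.mpr (Filter.Eventually.of_forall hune)⟩
    have hderiv : HasDerivAt Real.sinh 1 0 := by
      simpa using Real.hasDerivAt_sinh 0
    have hslope : Filter.Tendsto (slope Real.sinh 0) (nhdsWithin 0 {x : ℝ | x ≠ 0}) (nhds 1) :=
      hasDerivAt_iff_tendsto_slope.mp hderiv
    have hcomp : Filter.Tendsto (fun n => (u n)⁻¹ * Real.sinh (u n)) Filter.atTop (nhds 1) := by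
      have := hslope.comp hu0'
      simpa [Function.comp_def, slope_def_field, div_eq_inv_mul] using this
    have hfinal : Filter.Tendsto (fun n => t * ((u n)⁻¹ * Real.sinh (u n)))
        Filter.atTop (nhds (t * 1)) := hcomp.const_mul t
    rw [mul_one] at hfinal
    convert hfinal using 2 with n
    have : t * (u n)⁻¹ = 2 ^ (n + 1) := by
      rw [hu]
      field_simp
    rw [← mul_assoc, this]
end

section
/- Let S(y) = √((1+y)/2) and h(y) = √(2(y-1)). For every real y > 0, the sequence n ↦ 2ⁿ · h(S^{∘n}((y + y⁻¹)/2)) converges to |log y| as n → ∞. -/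
open Real Filter

private lemma cosh_half_sq (x : ℝ) : Real.cosh (x / 2) ^ 2 = (1 + Real.cosh x) / 2 := by
  have h : Real.cosh x = Real.cosh (2 * (x / 2)) := by ring_nf
  rw [h, Real.cosh_two_mul, Real.cosh_sq]; ring

private lemma sinh_half_sq (x : ℝ) : Real.sinh (x / 2) ^ 2 = (Real.cosh x - 1) / 2 := by
  have h : Real.cosh x = Real.cosh (2 * (x / 2)) := by ring_nf
  rw [h, Real.cosh_two_mul, Real.cosh_sq]; ring

private lemma sinh_div_self_tendsto :
    Filter.Tendsto (fun x : ℝ => Real.sinh x / x) (nhdsWithin 0 {0}ᶜ) (nhds 1) := by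
  have h := (Real.hasDerivAt_sinh 0)
  rw [hasDerivAt_iff_tendsto_slope] at h
  have : slope Real.sinh 0 = fun x : ℝ => Real.sinh x / x := by
    funext x; simp [slope_def_field, div_eq_mul_inv]
  rw [this, Real.cosh_zero] at h
  exact h

theorem nested_log (S h : ℝ → ℝ) (hS : ∀ y, S y = Real.sqrt ((1 + y) / 2))
    (hh : ∀ y, h y = Real.sqrt (2 * (y - 1))) (y : ℝ) (hy : 0 < y) :
    Filter.Tendsto (fun n : ℕ => 2 ^ n * h (S^[n] ((y + y⁻¹) / 2)))
      Filter.atTop (nhds |Real.log y|) := by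
  set t := |Real.log y| with htdef
  have ht0 : 0 ≤ t := abs_nonneg _
  have hcosh : (y + y⁻¹) / 2 = Real.cosh t := by
    rw [htdef, Real.cosh_abs, Real.cosh_log hy]
  have hScosh : ∀ s : ℝ, S (Real.cosh s) = Real.cosh (s / 2) := by
    intro s
    rw [hS, ← cosh_half_sq, Real.sqrt_sq (Real.cosh_pos _).le]
  have hSiter : ∀ n : ℕ, ∀ s : ℝ, S^[n] (Real.cosh s) = Real.cosh (s / 2 ^ n) := by
    intro n
    induction n with
    | zero => simp
    | succ n ih =>
      intro s
      rw [Function.iterate_succ_apply, hScosh, ih]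
      ring_nf
  have hhcosh : ∀ s : ℝ, 0 ≤ s → h (Real.cosh s) = 2 * Real.sinh (s / 2) := by
    intro s hs
    have hsin : 0 ≤ Real.sinh (s / 2) := by
      rw [← Real.sinh_zero]
      exact Real.sinh_le_sinh.mpr (by linarith)
    have : 2 * (Real.cosh s - 1) = (2 * Real.sinh (s / 2)) ^ 2 := by
      have := sinh_half_sq s
      nlinarith [this]
    rw [hh, this, Real.sqrt_sq (by linarith)]
  have key : ∀ n : ℕ, 2 ^ n * h (S^[n] ((y + y⁻¹) / 2))
      = 2 ^ (n + 1) * Real.sinh (t / 2 ^ (n + 1)) := by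
    intro n
    rw [hcosh, hSiter, hhcosh _ (by positivity)]
    rw [show t / 2 ^ n / 2 = t / 2 ^ (n + 1) by rw [pow_succ]; ring]
    ring
  simp only [key]
  rcases eq_or_lt_of_le ht0 with ht | ht
  · simp only [← ht, zero_div, Real.sinh_zero, mul_zero]
    exact tendsto_const_nhds
  · set u : ℕ → ℝ := fun n => t / 2 ^ (n + 1) with hu
    have hune : ∀ n, u n ≠ 0 := fun n => by positivity
    have hu0 : Filter.Tendsto u Filter.atTop (nhds 0) := by
      have h2 : Filter.Tendsto (fun n : ℕ => ((2:ℝ) ^ (n+1))⁻¹) Filter.atTop (nhds 0) := by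
        have := tendsto_pow_atTop_nhds_zero_of_lt_one (by norm_num : (0:ℝ) ≤ 1/2)
          (by norm_num : (1:ℝ)/2 < 1)
        have := this.comp (tendsto_add_atTop_nat 1)
        refine this.congr fun n => ?_
        simp [div_pow, one_div]
      have := h2.const_mul t
      rw [mul_zero] at this
      refine this.congr fun n => ?_
      simp [hu, div_eq_mul_inv]
    have hu0' : Filter.Tendsto u Filter.atTop (nhdsWithin 0 {0}ᶜ) :=
      tendsto_nhdsWithin_iff.mpr ⟨hu0, Filter.Eventually.of_forall fun n => hune n⟩
    have hcomp := (sinh_div_self_tendsto.comp hu0').const_mul t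
    rw [mul_one] at hcomp
    refine hcomp.congr fun n => ?_
    have h2 : (2:ℝ) ^ (n+1) ≠ 0 := by positivity
    simp only [Function.comp_apply, hu]
    field_simp [ht.ne']
end

section
/- Let S(y) = √((1+y)/2) and g(y) = √(2(1-y)). For every real y ≥ 0, the sequence n ↦ 2ⁿ · g(S^{∘n}(1/√(1+y²))) converges to arctan(y) as n → ∞. -/
open Real Filter

theorem nested_arctan (S g : ℝ → ℝ) (hS : ∀ y, S y = Real.sqrt ((1 + y) / 2))
    (hg : ∀ y, g y = Real.sqrt (2 * (1 - y))) (y : ℝ) (hy : 0 ≤ y) :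
    Filter.Tendsto (fun n : ℕ => 2 ^ n * g (S^[n] (1 / Real.sqrt (1 + y ^ 2))))
      Filter.atTop (nhds (Real.arctan y)) := by
  set θ := Real.arctan y with hθ
  have hθ0 : 0 ≤ θ := by
    rw [hθ, ← Real.arctan_zero]
    exact Real.arctan_strictMono.monotone hy
  have hθπ : θ < π / 2 := Real.arctan_lt_pi_div_two y
  have hbound : ∀ n : ℕ, θ / 2 ^ n ≤ π / 2 := by
    intro n
    calc θ / 2 ^ n ≤ θ := div_le_self hθ0 (one_le_pow₀ (by norm_num))
      _ ≤ π / 2 := hθπ.le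
  have hnn : ∀ n : ℕ, 0 ≤ θ / 2 ^ n := fun n => div_nonneg hθ0 (by positivity)
  have key : ∀ n : ℕ, S^[n] (1 / Real.sqrt (1 + y ^ 2)) = Real.cos (θ / 2 ^ n) := by
    intro n
    induction n with
    | zero => simp [hθ, Real.cos_arctan, one_div]
    | succ n ih =>
      rw [Function.iterate_succ_apply', ih, hS]
      have h2 : θ / 2 ^ n / 2 = θ / 2 ^ (n + 1) := by
        rw [div_div, pow_succ]
      rw [← Real.cos_half (by linarith [hnn n, Real.pi_pos]
          : -π ≤ θ / 2 ^ n) (by linarith [hbound n, Real.pi_pos]), h2]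
  have keyg : ∀ n : ℕ, g (Real.cos (θ / 2 ^ n)) = 2 * Real.sin (θ / 2 ^ (n + 1)) := by
    intro n
    rw [hg]
    have h2 : θ / 2 ^ n / 2 = θ / 2 ^ (n + 1) := by rw [div_div, pow_succ]
    have hsh := Real.sin_half_eq_sqrt (hnn n)
      (by linarith [hbound n, Real.pi_pos] : θ / 2 ^ n ≤ 2 * π)
    rw [h2] at hsh
    have h4 : 2 * (1 - Real.cos (θ / 2 ^ n)) = 2 ^ 2 * ((1 - Real.cos (θ / 2 ^ n)) / 2) := by
      ring
    rw [h4, Real.sqrt_mul (by positivity), Real.sqrt_sq (by norm_num : (0:ℝ) ≤ 2), ← hsh]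
  have heq : (fun n : ℕ => 2 ^ n * g (S^[n] (1 / Real.sqrt (1 + y ^ 2)))) =
      fun n : ℕ => 2 ^ (n + 1) * Real.sin (θ / 2 ^ (n + 1)) := by
    funext n
    rw [key n, keyg n, pow_succ]
    ring
  rw [heq]
  rcases eq_or_lt_of_le hθ0 with hθz | hθp
  · have : (fun n : ℕ => (2:ℝ) ^ (n + 1) * Real.sin (θ / 2 ^ (n + 1))) = fun _ => (0:ℝ) := by
      funext n; rw [← hθz]; simp
    rw [this, ← hθz]
    exact tendsto_const_nhds
  · have hsin : Tendsto (fun x : ℝ => x⁻¹ * Real.sin x) (nhdsWithin 0 {0}ᶜ) (nhds 1) := by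
      have h := Real.hasDerivAt_sin 0
      rw [hasDerivAt_iff_tendsto_slope] at h
      simpa [slope_fun_def, Real.cos_zero] using h
    have hh0 : Tendsto (fun n : ℕ => θ / 2 ^ (n + 1)) atTop (nhds 0) := by
      have : (fun n : ℕ => θ / 2 ^ (n + 1)) = fun n => θ * (1/2 : ℝ) ^ (n + 1) := by
        funext n; rw [div_eq_mul_inv, ← inv_pow]; norm_num
      rw [this]
      have := (tendsto_pow_atTop_nhds_zero_of_lt_one (by norm_num : (0:ℝ) ≤ 1/2)
        (by norm_num : (1/2:ℝ) < 1)).comp (tendsto_add_atTop_nat 1)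
      simpa using (tendsto_const_nhds (x := θ)).mul this
    have hh : Tendsto (fun n : ℕ => θ / 2 ^ (n + 1)) atTop (nhdsWithin 0 {0}ᶜ) := by
      apply tendsto_nhdsWithin_of_tendsto_nhds_of_eventually_within _ hh0
      filter_upwards with n
      have : 0 < θ / 2 ^ (n + 1) := div_pos hθp (by positivity)
      exact fun h => absurd h this.ne'
    have := (tendsto_const_nhds (x := θ)).mul (hsin.comp hh)
    rw [mul_one] at this
    apply this.congr
    intro n
    have hne : θ / 2 ^ (n + 1) ≠ 0 := (div_pos hθp (by positivity)).ne'
    show θ * ((θ / 2 ^ (n + 1))⁻¹ * Real.sin (θ / 2 ^ (n + 1))) = 2 ^ (n + 1) * Real.sin (θ / 2 ^ (n + 1))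
    field_simp
end

section
/- Let S(y) = √((1+y)/2). If -1 ≤ y ≤ 1, then S^{∘n}(y) → 1 as n → ∞, and moreover 2^(2n)·(1 - S^{∘n}(y)) converges to arccos(y)²/2. -/
open Real Filter

lemma sin_div_tendsto : Tendsto (fun x : ℝ => Real.sin x / x) (nhdsWithin 0 {(0:ℝ)}ᶜ) (nhds 1) := by
  have h := (Real.hasDerivAt_sin 0)
  rw [hasDerivAt_iff_tendsto_slope] at h
  simp only [Real.cos_zero] at h
  refine h.congr' ?_
  filter_upwards [self_mem_nhdsWithin] with x hx
  simp [slope_def_field, div_eq_div_iff]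

lemma one_sub_cos_div_sq_tendsto :
    Tendsto (fun x : ℝ => (1 - Real.cos x) / x ^ 2) (nhdsWithin 0 {(0:ℝ)}ᶜ) (nhds (1/2)) := by
  have hhalf : Tendsto (fun x : ℝ => x / 2) (nhdsWithin 0 {(0:ℝ)}ᶜ) (nhdsWithin 0 {(0:ℝ)}ᶜ) := by
    apply tendsto_nhdsWithin_of_tendsto_nhds_of_eventually_within
    · simpa using ((continuous_id.div_const (2:ℝ)).tendsto 0).mono_left
        (nhdsWithin_le_nhds (s := {(0:ℝ)}ᶜ))
    · filter_upwards [self_mem_nhdsWithin] with x hx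
      simp only [Set.mem_compl_iff, Set.mem_singleton_iff] at hx ⊢
      intro h; exact hx (by linarith)
  have h2 : Tendsto (fun x : ℝ => (Real.sin (x/2) / (x/2)) ^ 2 / 2)
      (nhdsWithin 0 {(0:ℝ)}ᶜ) (nhds (1/2)) := by
    have := ((sin_div_tendsto.comp hhalf).pow 2).div_const (2:ℝ)
    simpa using this
  refine h2.congr' ?_
  filter_upwards [self_mem_nhdsWithin] with x hx
  simp only [Set.mem_compl_iff, Set.mem_singleton_iff] at hx
  have hsin : Real.sin (x/2) ^ 2 = 1/2 - Real.cos x / 2 := by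
    have := Real.cos_sq (x/2)
    have h1 : Real.sin (x/2) ^ 2 = 1 - Real.cos (x/2) ^ 2 := by
      have := Real.sin_sq_add_cos_sq (x/2); linarith
    rw [h1, this]; ring_nf
  field_simp [div_pow]
  linear_combination 2 * hsin

theorem halfangle_rate (S : ℝ → ℝ) (hS : ∀ y, S y = Real.sqrt ((1 + y) / 2))
    (y : ℝ) (hy1 : -1 ≤ y) (hy2 : y ≤ 1) :
    Filter.Tendsto (fun n : ℕ => S^[n] y) Filter.atTop (nhds 1) ∧
    Filter.Tendsto (fun n : ℕ => 2 ^ (2 * n) * (1 - S^[n] y))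
      Filter.atTop (nhds (Real.arccos y ^ 2 / 2)) := by
  set θ := Real.arccos y with hθ
  have hθ0 : 0 ≤ θ := Real.arccos_nonneg y
  have hθπ : θ ≤ π := Real.arccos_le_pi y
  have hiter : ∀ (n : ℕ) (t : ℝ), 0 ≤ t → t ≤ π → S^[n] (Real.cos t) = Real.cos (t / 2 ^ n) := by
    intro n
    induction n with
    | zero => intro t _ _; simp
    | succ n ih =>
      intro t ht0 htπ
      rw [Function.iterate_succ_apply]
      have hSt : S (Real.cos t) = Real.cos (t / 2) := by
        rw [hS, Real.cos_half (by linarith) htπ]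
      rw [hSt, ih (t/2) (by linarith) (by linarith [Real.pi_pos])]
      congr 1
      rw [pow_succ]
      ring
  have hcos : Real.cos θ = y := Real.cos_arccos hy1 hy2
  have key : ∀ n : ℕ, S^[n] y = Real.cos (θ / 2 ^ n) := by
    intro n; rw [← hcos, hiter n θ hθ0 hθπ]
  have hdiv : Tendsto (fun n : ℕ => θ / 2 ^ n) atTop (nhds 0) := by
    have : Tendsto (fun n : ℕ => ((1:ℝ)/2) ^ n) atTop (nhds 0) :=
      tendsto_pow_atTop_nhds_zero_of_lt_one (by norm_num) (by norm_num)
    have := this.const_mul θ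
    simp only [mul_zero] at this
    refine this.congr fun n => ?_
    field_simp
    rw [mul_assoc, ← mul_pow]; norm_num
  constructor
  · have : Tendsto (fun n : ℕ => Real.cos (θ / 2 ^ n)) atTop (nhds 1) := by
      have := (Real.continuous_cos.tendsto 0).comp hdiv
      simpa [Function.comp_def] using this
    exact this.congr fun n => (key n).symm
  · rcases eq_or_lt_of_le hθ0 with h0 | h0
    · have : ∀ n : ℕ, (2:ℝ) ^ (2 * n) * (1 - S^[n] y) = 0 := by
        intro n; rw [key n, ← h0]; simp
      rw [← h0]
      simp only [this, hθ]
      simpa using tendsto_const_nhds (x := (0:ℝ)) (f := atTop (α := ℕ))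
    · have hdiv' : Tendsto (fun n : ℕ => θ / 2 ^ n) atTop (nhdsWithin 0 {(0:ℝ)}ᶜ) := by
        apply tendsto_nhdsWithin_of_tendsto_nhds_of_eventually_within _ hdiv
        refine Eventually.of_forall fun n => ?_
        simp only [Set.mem_compl_iff, Set.mem_singleton_iff]
        positivity
      have hcomp := (one_sub_cos_div_sq_tendsto.comp hdiv').const_mul (θ ^ 2)
      have heq : ∀ n : ℕ, θ ^ 2 * ((1 - Real.cos (θ / 2 ^ n)) / (θ / 2 ^ n) ^ 2)
          = 2 ^ (2 * n) * (1 - S^[n] y) := by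
        intro n
        rw [key n]
        have h2 : (θ / 2 ^ n) ^ 2 = θ ^ 2 / 2 ^ (2 * n) := by
          rw [div_pow, ← pow_mul, mul_comm n 2]
        rw [h2]
        have hθne : θ ^ 2 ≠ 0 := by positivity
        have h2ne : (2:ℝ) ^ (2 * n) ≠ 0 := by positivity
        field_simp
      have : Tendsto (fun n : ℕ => 2 ^ (2 * n) * (1 - S^[n] y)) atTop
          (nhds (θ ^ 2 * (1/2))) := by
        refine Tendsto.congr (fun n => heq n) ?_
        exact hcomp
      simpa [mul_one_div, div_eq_mul_inv] using this
end
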